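/- Let Δ ⊂ ℝⁿ be a compact convex polytope with 0 in its interior. Define the relative Donaldson–Futaki invariant L_θ(g) = (1/|Δ|)(∫_{∂Δ} g dσ - ∫_Δ g (n + θ_Δ) dy) where θ_Δ = 1 - |Δ| l and l is the Ricci affine function, and the relative Ding invariant I_l(g) = -g(0) + ∫_Δ g l dy. Then for every convex function g on Δ, L_θ(g) - I_l(g) = ((n+1)/|Δ|) ∫_Δ (ḡ - g) dy ≥ 0, where ḡ is the radial affinization of g. In particular, relative Ding semistability (I_l ≥ 0 on convex functions) implies relative K-semistability (L_θ ≥ 0 on convex functions). -/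

import Mathlib

/-!
Writing `y = t • z` with `z ∈ ∂Δ` and `t ∈ (0, 1]`, the radial pullback identity turns `∫_Δ ḡ`
into `∫_{∂Δ} ∫_0^1 t^(n-1) ((1 - t) g(0) + t g(z)) dt dσ`, and the inner integral is
`g(0)/n + (g(z) - g(0))/(n + 1)`. Applied to `1` this gives `σ(∂Δ) = n |Δ|`, and then to `ḡ`
it gives `(n + 1) ∫_Δ ḡ = ∫_{∂Δ} g dσ + |Δ| g(0)`. Substituting into `L_θ(g) - I_l(g)`, the
terms in `l` cancel and what remains is `((n + 1)/|Δ|) ∫_Δ (ḡ - g)`, nonnegative since `ḡ ≥ g`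
by convexity.
-/

open MeasureTheory Set Filter Topology

theorem integral_Ioc_pow_pred_mul_affine {n : ℕ} (hn : n ≠ 0) (c d : ℝ) :
    ∫ t in Ioc (0 : ℝ) 1, t ^ (n - 1) * ((1 - t) * c + t * d) = c / n + (d - c) / (n + 1) := by
  obtain ⟨m, rfl⟩ := Nat.exists_eq_succ_of_ne_zero hn
  have hsplit : ∀ t : ℝ,
      t ^ (m + 1 - 1) * ((1 - t) * c + t * d) = c * t ^ m + (d - c) * t ^ (m + 1) := fun t => by
    simp only [Nat.add_sub_cancel]
    ring
  simp only [hsplit, ← intervalIntegral.integral_of_le zero_le_one]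
  rw [intervalIntegral.integral_add ((intervalIntegral.intervalIntegrable_pow _).const_mul c)
    ((intervalIntegral.intervalIntegrable_pow _).const_mul (d - c)),
    intervalIntegral.integral_const_mul, intervalIntegral.integral_const_mul, integral_pow,
    integral_pow]
  push_cast
  field_simp
  ring

section Radial

variable {E : Type*} [NormedAddCommGroup E] [NormedSpace ℝ E] {Δ : Set E} {g : E → ℝ}

/-- The radial affinization: writing `y = t • z` with `z ∈ frontier Δ`, so that `t = gauge Δ y`,
it is `(1 - t) * g 0 + t * g z`. -/
noncomputable def radialAffinization (Δ : Set E) (g : E → ℝ) (y : E) : ℝ :=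
  (1 - gauge Δ y) * g 0 + gauge Δ y * g ((gauge Δ y)⁻¹ • y)

@[simp]
theorem radialAffinization_zero (Δ : Set E) (g : E → ℝ) : radialAffinization Δ g 0 = g 0 := by
  simp [radialAffinization]

theorem radialAffinization_smul_of_mem_frontier (hΔ : Convex ℝ Δ) (h0 : Δ ∈ 𝓝 0) (g : E → ℝ)
    {z : E} (hz : z ∈ frontier Δ) {t : ℝ} (ht : 0 ≤ t) :
    radialAffinization Δ g (t • z) = (1 - t) * g 0 + t * g z := by
  rcases ht.eq_or_lt with rfl | ht
  · simp
  have hgauge : gauge Δ (t • z) = t := by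
    rw [gauge_smul_of_nonneg ht.le, (gauge_eq_one_iff_mem_frontier hΔ h0).2 hz, smul_eq_mul,
      mul_one]
  simp [radialAffinization, hgauge, inv_smul_smul₀ ht.ne']

theorem gauge_pos_of_isBounded (h0 : Δ ∈ 𝓝 0) (hb : Bornology.IsBounded Δ) {y : E}
    (hy : y ≠ 0) : 0 < gauge Δ y :=
  (gauge_pos (absorbent_nhds_zero h0) (NormedSpace.isVonNBounded_of_isBounded ℝ hb)).2 hy

theorem gauge_inv_smul_mem_frontier (hΔ : Convex ℝ Δ) (h0 : Δ ∈ 𝓝 0)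
    (hb : Bornology.IsBounded Δ) {y : E} (hy : y ≠ 0) : (gauge Δ y)⁻¹ • y ∈ frontier Δ := by
  have ht := gauge_pos_of_isBounded h0 hb hy
  rw [← gauge_eq_one_iff_mem_frontier hΔ h0, gauge_smul_of_nonneg (inv_nonneg.2 ht.le),
    smul_eq_mul, inv_mul_cancel₀ ht.ne']

theorem exists_mem_frontier_smul_eq (hΔ : Convex ℝ Δ) (h0 : Δ ∈ 𝓝 0)
    (hb : Bornology.IsBounded Δ) {y : E} (hy : y ∈ Δ) (hy0 : y ≠ 0) :
    ∃ z ∈ frontier Δ, ∃ t ∈ Ioc (0 : ℝ) 1, t • z = y :=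
  ⟨_, gauge_inv_smul_mem_frontier hΔ h0 hb hy0, gauge Δ y,
    ⟨gauge_pos_of_isBounded h0 hb hy0, gauge_le_one_of_mem hy⟩,
    smul_inv_smul₀ (gauge_pos_of_isBounded h0 hb hy0).ne' y⟩

theorem le_radialAffinization (hΔ : Convex ℝ Δ) (h0 : Δ ∈ 𝓝 0) (hcl : IsClosed Δ)
    (hb : Bornology.IsBounded Δ) (hg : ConvexOn ℝ Δ g) {y : E} (hy : y ∈ Δ) :
    g y ≤ radialAffinization Δ g y := by
  rcases eq_or_ne y 0 with rfl | hy0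
  · simp
  obtain ⟨z, hz, t, ⟨ht0, ht1⟩, rfl⟩ := exists_mem_frontier_smul_eq hΔ h0 hb hy hy0
  rw [radialAffinization_smul_of_mem_frontier hΔ h0 g hz ht0.le]
  simpa using hg.2 (mem_of_mem_nhds h0) (hcl.frontier_subset hz) (sub_nonneg.2 ht1) ht0.le
    (sub_add_cancel 1 t)

theorem eqOn_radialAffinization (hΔ : Convex ℝ Δ) (h0 : Δ ∈ 𝓝 0) (hb : Bornology.IsBounded Δ)
    (hΔf : (frontier Δ).Nonempty) {gbar : E → ℝ}
    (hgbar : ∀ z ∈ frontier Δ, ∀ t ∈ Icc (0 : ℝ) 1, gbar (t • z) = (1 - t) * g 0 + t * g z) :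
    EqOn gbar (radialAffinization Δ g) Δ := by
  intro y hy
  rcases eq_or_ne y 0 with rfl | hy0
  · obtain ⟨z₀, hz₀⟩ := hΔf
    simpa using hgbar z₀ hz₀ 0 (left_mem_Icc.2 zero_le_one)
  obtain ⟨z, hz, t, ht, rfl⟩ := exists_mem_frontier_smul_eq hΔ h0 hb hy hy0
  rw [hgbar z hz t (Ioc_subset_Icc_self ht),
    radialAffinization_smul_of_mem_frontier hΔ h0 g hz ht.1.le]

theorem mapsTo_gauge_inv_smul (hΔ : Convex ℝ Δ) (h0 : Δ ∈ 𝓝 0) (hcl : IsClosed Δ)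
    (hb : Bornology.IsBounded Δ) : MapsTo (fun y => (gauge Δ y)⁻¹ • y) Δ Δ := by
  intro y hy
  rcases eq_or_ne y 0 with rfl | hy0
  · simpa using hy
  · exact hcl.frontier_subset (gauge_inv_smul_mem_frontier hΔ h0 hb hy0)

-- Near `0`, `radialAffinization Δ g - g 0 = gauge Δ * (g ∘ radial projection - g 0)`:
-- a vanishing factor times a bounded one.
theorem continuousWithinAt_radialAffinization_zero (hΔ : Convex ℝ Δ) (h0 : Δ ∈ 𝓝 0)
    (hc : IsCompact Δ) (hg : ContinuousOn g Δ) :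
    ContinuousWithinAt (radialAffinization Δ g) Δ 0 := by
  obtain ⟨M, hM⟩ := hc.exists_bound_of_continuousOn hg
  have hmaps := mapsTo_gauge_inv_smul hΔ h0 hc.isClosed hc.isBounded
  have hbdd : IsBoundedUnder (· ≤ ·) (𝓝[Δ] 0)
      ((fun x => ‖x‖) ∘ fun y => g ((gauge Δ y)⁻¹ • y) - g 0) :=
    isBoundedUnder_of_eventually_le (a := M + ‖g 0‖) <| eventually_nhdsWithin_of_forall
      fun y hy => (norm_sub_le _ _).trans (by gcongr; exact hM _ (hmaps hy))
  have hgauge : Tendsto (gauge Δ) (𝓝[Δ] 0) (𝓝 0) :=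
    ((continuous_gauge hΔ h0).tendsto' 0 0 gauge_zero).mono_left nhdsWithin_le_nhds
  have := (hgauge.zero_mul_isBoundedUnder_le hbdd).const_add (g 0)
  rw [ContinuousWithinAt, radialAffinization_zero]
  convert this using 2 with y
  · simp only [radialAffinization]; ring
  · simp

theorem continuousOn_radialAffinization (hΔ : Convex ℝ Δ) (h0 : Δ ∈ 𝓝 0) (hc : IsCompact Δ)
    (hg : ContinuousOn g Δ) : ContinuousOn (radialAffinization Δ g) Δ := by
  intro y hy
  rcases eq_or_ne y 0 with rfl | hy0
  · exact continuousWithinAt_radialAffinization_zero hΔ h0 hc hg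
  have hgauge := continuous_gauge hΔ h0
  have hmaps := mapsTo_gauge_inv_smul hΔ h0 hc.isClosed hc.isBounded
  have hproj : ContinuousAt (fun y => (gauge Δ y)⁻¹ • y) y :=
    (hgauge.continuousAt.inv₀ (gauge_pos_of_isBounded h0 hc.isBounded hy0).ne').smul
      continuousAt_id
  have hgproj : ContinuousWithinAt (fun y => g ((gauge Δ y)⁻¹ • y)) Δ y :=
    (hg _ (hmaps hy)).comp (f := fun y => (gauge Δ y)⁻¹ • y) hproj.continuousWithinAt hmaps
  exact ((continuousWithinAt_const.sub hgauge.continuousWithinAt).mul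
    continuousWithinAt_const).add (hgauge.continuousWithinAt.mul hgproj)

end Radial

section RadialPullback

variable {E : Type*} [NormedAddCommGroup E] [NormedSpace ℝ E] [MeasurableSpace E]
  {n : ℕ} {μ σ : Measure E} {Δ : Set E}

/-- Integration in polar coordinates adapted to `Δ`: `y = t • z` with `z ∈ frontier Δ`,
`t ∈ (0, 1]`, and `dμ(y) = t ^ (n - 1) dt dσ(z)`. -/
def IsRadialPullback (n : ℕ) (μ σ : Measure E) (Δ : Set E) : Prop :=
  ∀ F : E → ℝ, ContinuousOn F (closure Δ) →
    ∫ y in Δ, F y ∂μ = ∫ z in frontier Δ, (∫ t in Ioc (0 : ℝ) 1, t ^ (n - 1) * F (t • z)) ∂σ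

namespace IsRadialPullback

theorem frontier_nonempty (h : IsRadialPullback n μ σ Δ) (hΔ : μ.real Δ ≠ 0) :
    (frontier Δ).Nonempty := by
  rw [nonempty_iff_ne_empty]
  intro hf
  exact hΔ (by simpa [hf] using h (fun _ => 1) continuousOn_const)

theorem measureReal_frontier (h : IsRadialPullback n μ σ Δ) (hn : n ≠ 0) :
    σ.real (frontier Δ) = n * μ.real Δ := by
  have h1 := h (fun _ => 1) continuousOn_const
  have hinner : ∫ t in Ioc (0 : ℝ) 1, t ^ (n - 1) = 1 / n := by
    simpa using integral_Ioc_pow_pred_mul_affine hn 1 1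
  simp only [mul_one, hinner, setIntegral_const, smul_eq_mul] at h1
  rw [h1]
  field_simp

theorem measure_frontier_ne_top (h : IsRadialPullback n μ σ Δ) (hn : n ≠ 0)
    (hΔ : μ.real Δ ≠ 0) : σ (frontier Δ) ≠ ⊤ := by
  intro htop
  have := h.measureReal_frontier hn
  rw [measureReal_def, htop, ENNReal.toReal_top, eq_comm, mul_eq_zero] at this
  exact this.elim (Nat.cast_ne_zero.2 hn) hΔ

theorem add_one_mul_setIntegral_of_affine_on_rays [OpensMeasurableSpace E]
    (h : IsRadialPullback n μ σ Δ) (hn : n ≠ 0) (hσ : σ (frontier Δ) ≠ ⊤) {F f : E → ℝ} {c : ℝ}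
    (hF : ContinuousOn F (closure Δ))
    (hFf : ∀ z ∈ frontier Δ, ∀ t ∈ Ioc (0 : ℝ) 1, F (t • z) = (1 - t) * c + t * f z)
    (hf : IntegrableOn f (frontier Δ) σ) :
    (n + 1) * ∫ y in Δ, F y ∂μ = ∫ z in frontier Δ, f z ∂σ + μ.real Δ * c := by
  have hinner : EqOn (fun z => ∫ t in Ioc (0 : ℝ) 1, t ^ (n - 1) * F (t • z))
      (fun z => (c / n - c / (n + 1)) + f z / (n + 1)) (frontier Δ) := fun z hz => by
    dsimp only
    rw [setIntegral_congr_fun (g := fun t => t ^ (n - 1) * ((1 - t) * c + t * f z))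
      measurableSet_Ioc fun t ht => by rw [hFf z hz t ht], integral_Ioc_pow_pred_mul_affine hn]
    ring
  rw [h F hF, setIntegral_congr_fun isClosed_frontier.measurableSet hinner,
    integral_add (integrableOn_const (C := c / n - c / (n + 1)) hσ) (hf.div_const _),
    setIntegral_const, integral_div, smul_eq_mul, h.measureReal_frontier hn]
  field_simp
  ring

theorem add_one_mul_setIntegral_radialAffinization [OpensMeasurableSpace E]
    (h : IsRadialPullback n μ σ Δ) (hn : n ≠ 0) (hΔ : μ.real Δ ≠ 0) (hconv : Convex ℝ Δ)
    (h0 : Δ ∈ 𝓝 0) (hc : IsCompact Δ) {g : E → ℝ} (hg : ContinuousOn g Δ) :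
    (n + 1) * ∫ y in Δ, radialAffinization Δ g y ∂μ =
      ∫ z in frontier Δ, g z ∂σ + μ.real Δ * g 0 := by
  have hσ := h.measure_frontier_ne_top hn hΔ
  refine h.add_one_mul_setIntegral_of_affine_on_rays hn hσ ?_
    (fun _ hz _ ht => radialAffinization_smul_of_mem_frontier hconv h0 g hz ht.1.le)
    (hg.integrableOn_of_subset_isCompact hc isClosed_frontier.measurableSet
      hc.isClosed.frontier_subset hσ)
  rw [hc.isClosed.closure_eq]
  exact continuousOn_radialAffinization hconv h0 hc hg

end IsRadialPullback

end RadialPullback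

section RelativeInvariants

variable {E : Type*} [TopologicalSpace E] [Zero E] [MeasurableSpace E]

/-- The relative Donaldson–Futaki invariant `L_θ(g)`, with `θ_Δ = 1 - |Δ| l`. -/
noncomputable def relativeDFInvariant (n : ℕ) (μ σ : Measure E) (Δ : Set E) (l g : E → ℝ) : ℝ :=
  (μ.real Δ)⁻¹ *
    ((∫ z in frontier Δ, g z ∂σ) - ∫ y in Δ, g y * (n + (1 - μ.real Δ * l y)) ∂μ)

noncomputable def relativeDingInvariant (μ : Measure E) (Δ : Set E) (l g : E → ℝ) : ℝ :=
  -g 0 + ∫ y in Δ, g y * l y ∂μ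

theorem relativeDFInvariant_sub_relativeDingInvariant {n : ℕ} {μ σ : Measure E} {Δ : Set E}
    {l g G : E → ℝ} (hΔ : μ.real Δ ≠ 0) (hg : IntegrableOn g Δ μ)
    (hgl : IntegrableOn (fun y => g y * l y) Δ μ) (hG : IntegrableOn G Δ μ)
    (hGg : (n + 1) * ∫ y in Δ, G y ∂μ = ∫ z in frontier Δ, g z ∂σ + μ.real Δ * g 0) :
    relativeDFInvariant n μ σ Δ l g - relativeDingInvariant μ Δ l g =
      (n + 1) * (μ.real Δ)⁻¹ * ∫ y in Δ, (G y - g y) ∂μ := by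
  have hsplit : ∫ y in Δ, g y * (n + (1 - μ.real Δ * l y)) ∂μ =
      (n + 1) * (∫ y in Δ, g y ∂μ) - μ.real Δ * ∫ y in Δ, g y * l y ∂μ := by
    rw [← integral_const_mul, ← integral_const_mul,
      ← integral_sub (hg.const_mul _) (hgl.const_mul _)]
    congr 1 with y
    ring
  rw [relativeDFInvariant, relativeDingInvariant, hsplit, integral_sub hG hg,
    eq_sub_of_add_eq hGg.symm]
  field_simp
  ring

end RelativeInvariants

theorem relative_DF_sub_relative_ding_general {n : ℕ} (Δ : Set (Fin n → ℝ))
    (hΔc : IsCompact Δ) (hΔconv : Convex ℝ Δ)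
    (h0 : (0 : Fin n → ℝ) ∈ interior Δ)
    (σ : Measure (Fin n → ℝ))
    (hpull : ∀ F : (Fin n → ℝ) → ℝ, ContinuousOn F (closure Δ) →
      ∫ y in Δ, F y =
        ∫ z in frontier Δ, (∫ t in Set.Ioc (0 : ℝ) 1, t ^ (n - 1) * F (t • z)) ∂σ)
    (l : (Fin n → ℝ) → ℝ)
    (hla : ∃ a : Fin n → ℝ, ∃ c : ℝ, ∀ y, l y = (∑ i, a i * y i) + c)
    (g : (Fin n → ℝ) → ℝ) (hgconv : ConvexOn ℝ Δ g)
    (hgcont : ContinuousOn g (closure Δ))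
    (gbar : (Fin n → ℝ) → ℝ)
    (hgbar : ∀ z ∈ frontier Δ, ∀ t ∈ Set.Icc (0 : ℝ) 1,
      gbar (t • z) = (1 - t) * g 0 + t * g z) :
    ((volume Δ).toReal⁻¹ *
        ((∫ z in frontier Δ, g z ∂σ) -
          ∫ y in Δ, g y * (n + (1 - (volume Δ).toReal * l y))) -
      (-g 0 + ∫ y in Δ, g y * l y) =
      (n + 1 : ℝ) * (volume Δ).toReal⁻¹ * ∫ y in Δ, (gbar y - g y)) ∧
    (0 ≤ (n + 1 : ℝ) * (volume Δ).toReal⁻¹ * ∫ y in Δ, (gbar y - g y)) ∧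
    (0 ≤ -g 0 + (∫ y in Δ, g y * l y) →
      0 ≤ (volume Δ).toReal⁻¹ *
        ((∫ z in frontier Δ, g z ∂σ) -
          ∫ y in Δ, g y * (n + (1 - (volume Δ).toReal * l y)))) := by
  have hpull : IsRadialPullback n volume σ Δ := hpull
  have hΔ0 : Δ ∈ 𝓝 0 := mem_interior_iff_mem_nhds.1 h0
  rw [hΔc.isClosed.closure_eq] at hgcont
  have hV : volume.real Δ ≠ 0 := (ENNReal.toReal_pos
    (Measure.measure_pos_of_nonempty_interior _ ⟨0, h0⟩).ne' hΔc.measure_ne_top).ne'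
  obtain ⟨z₀, hz₀⟩ := hpull.frontier_nonempty hV
  have hn : n ≠ 0 := by
    rintro rfl
    exact disjoint_left.1 disjoint_interior_frontier (Subsingleton.elim 0 z₀ ▸ h0) hz₀
  have hgbar' : EqOn gbar (radialAffinization Δ g) Δ :=
    eqOn_radialAffinization hΔconv hΔ0 hΔc.isBounded ⟨z₀, hz₀⟩ hgbar
  have hl : Continuous l := by
    obtain ⟨a, c, hl⟩ := hla
    exact funext hl ▸ by fun_prop
  have hgap : ∫ y in Δ, (gbar y - g y) = ∫ y in Δ, (radialAffinization Δ g y - g y) :=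
    setIntegral_congr_fun hΔc.measurableSet fun y hy => by rw [hgbar' hy]
  have hid : relativeDFInvariant n volume σ Δ l g - relativeDingInvariant volume Δ l g =
      (n + 1) * (volume.real Δ)⁻¹ * ∫ y in Δ, (gbar y - g y) :=
    hgap ▸ relativeDFInvariant_sub_relativeDingInvariant hV (hgcont.integrableOn_compact hΔc)
      ((hgcont.mul hl.continuousOn).integrableOn_compact hΔc)
      ((continuousOn_radialAffinization hΔconv hΔ0 hΔc hgcont).integrableOn_compact hΔc)
      (hpull.add_one_mul_setIntegral_radialAffinization hn hV hΔconv hΔ0 hΔc hgcont)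
  have hpos : 0 ≤ (n + 1 : ℝ) * (volume.real Δ)⁻¹ * ∫ y in Δ, (gbar y - g y) :=
    mul_nonneg (by positivity) <| setIntegral_nonneg hΔc.measurableSet fun y hy => by
      rw [hgbar' hy, sub_nonneg]
      exact le_radialAffinization hΔconv hΔ0 hΔc.isClosed hΔc.isBounded hgconv hy
  exact ⟨hid, hpos, fun (_ : 0 ≤ relativeDingInvariant volume Δ l g) =>
    (by linarith : 0 ≤ relativeDFInvariant n volume σ Δ l g)⟩

/-- Relative Donaldson–Futaki versus relative Ding invariant:
`L_θ(g) - I_l(g) = ((n+1)/|Δ|) ∫_Δ (ḡ - g) dy ≥ 0`, where `θ_Δ = 1 - |Δ|·l`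
and `ḡ` is the radial affinization of `g`; in particular `I_l(g) ≥ 0`
implies `L_θ(g) ≥ 0` (relative Ding semistability implies relative
K-semistability). -/
theorem relative_DF_sub_relative_ding {n : ℕ} (Δ : Set (Fin n → ℝ))
    (hΔc : IsCompact Δ) (hΔconv : Convex ℝ Δ)
    (h0 : (0 : Fin n → ℝ) ∈ interior Δ)
    (σ : Measure (Fin n → ℝ)) (hσfin : IsFiniteMeasure σ)
    (hpull : ∀ F : (Fin n → ℝ) → ℝ, ContinuousOn F (closure Δ) →
      ∫ y in Δ, F y =
        ∫ z in frontier Δ, (∫ t in Set.Ioc (0 : ℝ) 1, t ^ (n - 1) * F (t • z)) ∂σ)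
    (l : (Fin n → ℝ) → ℝ)
    (hla : ∃ a : Fin n → ℝ, ∃ c : ℝ, ∀ y, l y = (∑ i, a i * y i) + c)
    (hl1 : ∫ y in Δ, l y = 1)
    (hlm : ∀ i : Fin n, ∫ y in Δ, y i * l y = 0)
    (g : (Fin n → ℝ) → ℝ) (hgconv : ConvexOn ℝ Δ g)
    (hgcont : ContinuousOn g (closure Δ))
    (gbar : (Fin n → ℝ) → ℝ)
    (hgbar : ∀ z ∈ frontier Δ, ∀ t ∈ Set.Icc (0 : ℝ) 1,
      gbar (t • z) = (1 - t) * g 0 + t * g z) :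
    ((volume Δ).toReal⁻¹ *
        ((∫ z in frontier Δ, g z ∂σ) -
          ∫ y in Δ, g y * (n + (1 - (volume Δ).toReal * l y))) -
      (-g 0 + ∫ y in Δ, g y * l y) =
      (n + 1 : ℝ) * (volume Δ).toReal⁻¹ * ∫ y in Δ, (gbar y - g y)) ∧
    (0 ≤ (n + 1 : ℝ) * (volume Δ).toReal⁻¹ * ∫ y in Δ, (gbar y - g y)) ∧
    (0 ≤ -g 0 + (∫ y in Δ, g y * l y) →
      0 ≤ (volume Δ).toReal⁻¹ *
        ((∫ z in frontier Δ, g z ∂σ) -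
          ∫ y in Δ, g y * (n + (1 - (volume Δ).toReal * l y)))) :=
  relative_DF_sub_relative_ding_general Δ hΔc hΔconv h0 σ hpull l hla g hgconv hgcont gbar hgbar
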